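/- Let X be a finite nonempty set and let N be a semi-directed binary phylogenetic network on X that is level-1. Then N has at most |X| - 1 reticulations. -/

import Mathlib

namespace Phylo

/-- A rooted directed multigraph (edges as a multiset of ordered pairs) with a
designated root, with vertices drawn from `ℕ`. -/
structure RootedNet where
  verts : Finset ℕ
  edges : Multiset (ℕ × ℕ)
  root : ℕ

namespace RootedNet

/-- In-degree of a vertex. -/
def inDeg (N : RootedNet) (v : ℕ) : ℕ := (N.edges.filter (fun e => e.2 = v)).card

/-- Out-degree of a vertex. -/
def outDeg (N : RootedNet) (v : ℕ) : ℕ := (N.edges.filter (fun e => e.1 = v)).card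

/-- A reticulation of a rooted network: a vertex of in-degree two. -/
def IsRet (N : RootedNet) (v : ℕ) : Prop := v ∈ N.verts ∧ N.inDeg v = 2

/-- A tree vertex of a rooted network: in-degree one and out-degree two. -/
def IsTreeVert (N : RootedNet) (v : ℕ) : Prop :=
  v ∈ N.verts ∧ N.inDeg v = 1 ∧ N.outDeg v = 2

/-- The number of reticulations. -/
def numRet (N : RootedNet) : ℕ := (N.verts.filter (fun v => N.inDeg v = 2)).card

/-- The number of tree vertices. -/
def numTreeVert (N : RootedNet) : ℕ :=
  (N.verts.filter (fun v => N.inDeg v = 1 ∧ N.outDeg v = 2)).card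

/-- `N` is a rooted binary phylogenetic network on leaf set `X`:
a rooted acyclic digraph without loops in which the root has in-degree 0 and
out-degree 1, the out-degree-0 vertices are exactly `X` and have in-degree 1,
and every other non-root vertex is a tree vertex or a reticulation. -/
def IsPhylo (X : Finset ℕ) (N : RootedNet) : Prop :=
  X.Nonempty ∧ X ⊆ N.verts ∧
  (∀ e ∈ N.edges, e.1 ∈ N.verts ∧ e.2 ∈ N.verts) ∧
  (∀ v : ℕ, ¬ Relation.TransGen (fun a b => (a, b) ∈ N.edges) v v) ∧
  N.root ∈ N.verts ∧ N.inDeg N.root = 0 ∧ N.outDeg N.root = 1 ∧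
  (∀ v ∈ N.verts, (v ∈ X ↔ N.outDeg v = 0)) ∧
  (∀ v ∈ N.verts, N.outDeg v = 0 → N.inDeg v = 1) ∧
  (∀ v ∈ N.verts, v ≠ N.root → N.outDeg v ≠ 0 →
    (N.inDeg v = 1 ∧ N.outDeg v = 2) ∨ (N.inDeg v = 2 ∧ N.outDeg v = 1))

/-- The underlying undirected edge multiset of a rooted network. -/
def underlying (N : RootedNet) : Multiset (Sym2 ℕ) :=
  N.edges.map (fun e => s(e.1, e.2))

end RootedNet

/-- The multiset of (undirected) edges traversed by the closed walk through the
vertices of the list `c` (in cyclic order). -/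
def cycleEdges (c : List ℕ) : Multiset (Sym2 ℕ) :=
  ↑(List.zipWith (fun a b => s(a, b)) c (c.rotate 1))

/-- The list `c` of distinct vertices is a cycle in the undirected multigraph
with edge multiset `E` (with multiplicities: a cycle of length 2 needs a pair of
parallel edges; a cycle of length 1 is a loop). -/
def IsCycleIn (E : Multiset (Sym2 ℕ)) (c : List ℕ) : Prop :=
  c ≠ [] ∧ c.Nodup ∧ cycleEdges c ≤ E

/-- Level-1: each cycle has length at least three and no two (distinct) cycles
share a vertex. -/
def Level1 (E : Multiset (Sym2 ℕ)) : Prop :=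
  (∀ c : List ℕ, IsCycleIn E c → 3 ≤ c.length) ∧
  (∀ c₁ c₂ : List ℕ, IsCycleIn E c₁ → IsCycleIn E c₂ →
    cycleEdges c₁ ≠ cycleEdges c₂ → ∀ v, v ∈ c₁ → v ∉ c₂)

/-- Almost level-1: at most one cycle of length two, all other cycles have
length at least three, and no two (distinct) cycles share a vertex. -/
def AlmostLevel1 (E : Multiset (Sym2 ℕ)) : Prop :=
  (∀ c : List ℕ, IsCycleIn E c → 2 ≤ c.length) ∧
  (∀ c₁ c₂ : List ℕ, IsCycleIn E c₁ → IsCycleIn E c₂ → c₁.length = 2 →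
    c₂.length = 2 → cycleEdges c₁ = cycleEdges c₂) ∧
  (∀ c₁ c₂ : List ℕ, IsCycleIn E c₁ → IsCycleIn E c₂ →
    cycleEdges c₁ ≠ cycleEdges c₂ → ∀ v, v ∈ c₁ → v ∉ c₂)

/-- Reachability in the undirected multigraph with edge multiset `E`. -/
def Reaches (E : Multiset (Sym2 ℕ)) (u v : ℕ) : Prop :=
  Relation.ReflTransGen (fun a b => s(a, b) ∈ E) u v

/-- The graph on vertex set `V` with undirected edge multiset `E` has exactly
two connected components. -/
def TwoComponents (V : Finset ℕ) (E : Multiset (Sym2 ℕ)) : Prop :=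
  ∃ A B : Finset ℕ, A.Nonempty ∧ B.Nonempty ∧ A ∪ B = V ∧ Disjoint A B ∧
    (∀ u ∈ A, ∀ v ∈ A, Reaches E u v) ∧
    (∀ u ∈ B, ∀ v ∈ B, Reaches E u v) ∧
    (∀ u ∈ A, ∀ v ∈ B, ¬ Reaches E u v)

/-- `e` is a cut edge: deleting (one copy of) it leaves exactly two connected
components. -/
def IsCutEdgeU (V : Finset ℕ) (E : Multiset (Sym2 ℕ)) (e : Sym2 ℕ) : Prop :=
  e ∈ E ∧ TwoComponents V (E.erase e)

/-- A cut edge of a rooted network. -/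
def RootedNet.IsCutEdge (N : RootedNet) (e : ℕ × ℕ) : Prop :=
  e ∈ N.edges ∧ TwoComponents N.verts (N.underlying.erase s(e.1, e.2))

/-- Isomorphism of rooted networks fixing each leaf in `X`. -/
def RootedNet.Iso (X : Finset ℕ) (N N' : RootedNet) : Prop :=
  ∃ ψ : ℕ → ℕ, Set.BijOn ψ (N.verts : Set ℕ) (N'.verts : Set ℕ) ∧
    (∀ x ∈ X, ψ x = x) ∧
    N'.edges = N.edges.map (fun e => (ψ e.1, ψ e.2))

/-- Cut edge transfer (CET) on rooted binary phylogenetic networks on `X`: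
delete the cut edge `(u,v)` (not incident with the root, `u` not a
reticulation), suppress `u`, subdivide an edge `(a,b)` of the root component
with a fresh vertex `u'` and add the edge `(u',v)`; the result must not be
isomorphic to the original network. -/
def RootedNet.CET (X : Finset ℕ) (N N' : RootedNet) : Prop :=
  N.IsPhylo X ∧ N'.IsPhylo X ∧ ¬ RootedNet.Iso X N N' ∧
  ∃ u v p c a b u' : ℕ, ∃ M : RootedNet,
    N.IsCutEdge (u, v) ∧ u ≠ N.root ∧ v ≠ N.root ∧ ¬ N.IsRet u ∧
    N.edges.filter (fun e => e.2 = u) = {(p, u)} ∧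
    N.edges.filter (fun e => e.1 = u) = {(u, v), (u, c)} ∧
    M.verts = N.verts.erase u ∧
    M.edges = (p, c) ::ₘ (((N.edges.erase (u, v)).erase (p, u)).erase (u, c)) ∧
    M.root = N.root ∧
    (a, b) ∈ M.edges ∧ Reaches M.underlying N.root a ∧
    u' ∉ M.verts ∧
    N'.verts = insert u' M.verts ∧
    N'.edges = (a, u') ::ₘ (u', b) ::ₘ (u', v) ::ₘ (M.edges.erase (a, b)) ∧
    N'.root = N.root

/-- A mixed multigraph: directed (reticulation) edges and undirected edges. -/
structure MixedNet where
  verts : Finset ℕ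
  dedges : Multiset (ℕ × ℕ)
  uedges : Multiset (Sym2 ℕ)

namespace MixedNet

/-- The underlying undirected edge multiset of a mixed network. -/
def underlying (N : MixedNet) : Multiset (Sym2 ℕ) :=
  N.uedges + N.dedges.map (fun e => s(e.1, e.2))

/-- Directed in-degree. -/
def dInDeg (N : MixedNet) (v : ℕ) : ℕ := (N.dedges.filter (fun e => e.2 = v)).card

/-- A reticulation of a semi-directed network: two edges directed into `v`, or
a loop at `v`. -/
def IsRet (N : MixedNet) (v : ℕ) : Prop :=
  v ∈ N.verts ∧ (N.dInDeg v = 2 ∨ (v, v) ∈ N.dedges)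

/-- The number of reticulations of a semi-directed network. -/
def numRet (N : MixedNet) : ℕ :=
  (N.verts.filter (fun v => N.dInDeg v = 2 ∨ (v, v) ∈ N.dedges)).card

/-- Isomorphism of mixed networks fixing each leaf in `X`. -/
def Iso (X : Finset ℕ) (N N' : MixedNet) : Prop :=
  ∃ ψ : ℕ → ℕ, Set.BijOn ψ (N.verts : Set ℕ) (N'.verts : Set ℕ) ∧
    (∀ x ∈ X, ψ x = x) ∧
    N'.dedges = N.dedges.map (fun e => (ψ e.1, ψ e.2)) ∧
    N'.uedges = N.uedges.map (Sym2.map ψ)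

end MixedNet

/-- Edges of `Nr` surviving the passage to the semi-directed network:
those not incident with the root or with the child `t` of the root. -/
def semiKeep (Nr : RootedNet) (t : ℕ) : Multiset (ℕ × ℕ) :=
  Nr.edges.filter (fun e => ¬(e.1 = Nr.root) ∧ ¬(e.1 = t) ∧ ¬(e.2 = t))

/-- Surviving edges that stay directed (those into a reticulation). -/
def semiKeepD (Nr : RootedNet) (t : ℕ) : Multiset (ℕ × ℕ) :=
  (semiKeep Nr t).filter (fun e => Nr.inDeg e.2 = 2)

/-- Surviving edges that become undirected (tree edges). -/
def semiKeepU (Nr : RootedNet) (t : ℕ) : Multiset (Sym2 ℕ) :=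
  ((semiKeep Nr t).filter (fun e => ¬ Nr.inDeg e.2 = 2)).map (fun e => s(e.1, e.2))

/-- `Ns` is the mixed graph obtained from the rooted network `Nr` by deleting
the root, suppressing the resulting in-degree-0 out-degree-2 vertex `t`, and
undirecting all tree edges. If the two out-edges of `t` are parallel, a
directed loop is created; the edge created by suppressing `t` is directed
towards a reticulation endpoint, and undirected otherwise. -/
def SemiDirectedFrom (Nr : RootedNet) (Ns : MixedNet) : Prop :=
  ∃ t w₁ w₂ : ℕ,
    (Nr.root, t) ∈ Nr.edges ∧
    Nr.edges.filter (fun e => e.1 = t) = {(t, w₁), (t, w₂)} ∧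
    Ns.verts = (Nr.verts.erase Nr.root).erase t ∧
    ((w₁ = w₂ ∧ Ns.dedges = (w₁, w₁) ::ₘ semiKeepD Nr t ∧
        Ns.uedges = semiKeepU Nr t) ∨
     (w₁ ≠ w₂ ∧ Nr.inDeg w₁ = 2 ∧ Ns.dedges = (w₂, w₁) ::ₘ semiKeepD Nr t ∧
        Ns.uedges = semiKeepU Nr t) ∨
     (w₁ ≠ w₂ ∧ ¬ Nr.inDeg w₁ = 2 ∧ Nr.inDeg w₂ = 2 ∧
        Ns.dedges = (w₁, w₂) ::ₘ semiKeepD Nr t ∧ Ns.uedges = semiKeepU Nr t) ∨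
     (¬ Nr.inDeg w₁ = 2 ∧ ¬ Nr.inDeg w₂ = 2 ∧ Ns.dedges = semiKeepD Nr t ∧
        Ns.uedges = s(w₁, w₂) ::ₘ semiKeepU Nr t))

/-- `Nr` is a rooted partner of the semi-directed network `Ns` on `X`. -/
def IsRootedPartner (X : Finset ℕ) (Nr : RootedNet) (Ns : MixedNet) : Prop :=
  Nr.IsPhylo X ∧ SemiDirectedFrom Nr Ns

/-- `Ns` is a semi-directed binary phylogenetic network on `X`. -/
def IsSemiDirected (X : Finset ℕ) (Ns : MixedNet) : Prop :=
  ∃ Nr : RootedNet, IsRootedPartner X Nr Ns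

/-- `Ns` is a semi-directed level-1 network on `X`: it has a level-1 rooted
partner. -/
def IsSemiLevel1 (X : Finset ℕ) (Ns : MixedNet) : Prop :=
  ∃ Nr : RootedNet, IsRootedPartner X Nr Ns ∧ Level1 Nr.underlying

/-- `Ns` is a semi-directed almost level-1 network on `X`: it has an almost
level-1 rooted partner. -/
def IsSemiAlmostLevel1 (X : Finset ℕ) (Ns : MixedNet) : Prop :=
  ∃ Nr : RootedNet, IsRootedPartner X Nr Ns ∧ AlmostLevel1 Nr.underlying

/-- Delete the undirected edge `{u,v}` from `N`, giving `M`. -/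
def DeleteUEdge (N : MixedNet) (u v : ℕ) (M : MixedNet) : Prop :=
  M.verts = N.verts ∧ N.uedges = s(u, v) ::ₘ M.uedges ∧ M.dedges = N.dedges

/-- Suppress the degree-two vertex `w` of `N` whose two incident edges lead to
`a` and `b`, giving `M`. The merged edge is directed into a reticulation
endpoint (in particular two parallel directed donor edges merge to a loop when
`a = b`) and undirected otherwise. -/
def SuppressVertexAt (N : MixedNet) (w a b : ℕ) (M : MixedNet) : Prop :=
  M.verts = N.verts.erase w ∧
  (∀ g ∈ M.uedges, ¬ w ∈ g) ∧ (∀ g ∈ M.dedges, g.1 ≠ w ∧ g.2 ≠ w) ∧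
  ((∃ U₀, N.uedges = s(w, a) ::ₘ s(w, b) ::ₘ U₀ ∧ M.uedges = s(a, b) ::ₘ U₀ ∧
      M.dedges = N.dedges) ∨
   (∃ U₀ D₀, N.uedges = s(w, a) ::ₘ U₀ ∧ N.dedges = (w, b) ::ₘ D₀ ∧
      M.uedges = U₀ ∧ M.dedges = (a, b) ::ₘ D₀) ∨
   (∃ U₀ D₀, N.uedges = U₀ ∧ N.dedges = (w, a) ::ₘ (w, b) ::ₘ D₀ ∧
      M.uedges = U₀ ∧ (M.dedges = (a, b) ::ₘ D₀ ∨ M.dedges = (b, a) ::ₘ D₀)))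

/-- Subdivide the recipient edge (with underlying edge `f`, lying in the
connected component of `M` not containing `v`) with a fresh vertex `u'` and add
the new cut edge `{u',v}`, giving `N'`. Subdividing a loop `(w,w)` produces two
parallel edges directed into `w`. -/
def SubdivideAttach (M : MixedNet) (u' v : ℕ) (f : Sym2 ℕ) (N' : MixedNet) : Prop :=
  u' ∉ M.verts ∧ N'.verts = insert u' M.verts ∧
  (∃ a, a ∈ f ∧ ¬ Reaches M.underlying v a) ∧
  ((∃ a b U₀, f = s(a, b) ∧ M.uedges = s(a, b) ::ₘ U₀ ∧
      N'.uedges = s(a, u') ::ₘ s(u', b) ::ₘ s(u', v) ::ₘ U₀ ∧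
      N'.dedges = M.dedges) ∨
   (∃ a b D₀, f = s(a, b) ∧ a ≠ b ∧ M.dedges = (a, b) ::ₘ D₀ ∧
      N'.dedges = (u', b) ::ₘ D₀ ∧
      N'.uedges = s(a, u') ::ₘ s(u', v) ::ₘ M.uedges) ∨
   (∃ w D₀, f = s(w, w) ∧ M.dedges = (w, w) ::ₘ D₀ ∧
      N'.dedges = (u', w) ::ₘ (u', w) ::ₘ D₀ ∧
      N'.uedges = s(u', v) ::ₘ M.uedges))

/-- Witness data for a cut edge transfer (CET) on semi-directed networks on
`X`, recording the deleted cut edge `{u,v}`, the other endpoints `w₁, w₂` of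
the two donor edges at `u`, the fresh vertex `u'` and the (underlying edge of
the) recipient edge `f`. -/
def MixedNet.CETWitness (X : Finset ℕ) (N N' : MixedNet)
    (u v w₁ w₂ u' : ℕ) (f : Sym2 ℕ) : Prop :=
  IsSemiDirected X N ∧ IsSemiDirected X N' ∧ ¬ MixedNet.Iso X N N' ∧
  s(u, v) ∈ N.uedges ∧ IsCutEdgeU N.verts N.underlying s(u, v) ∧
  ¬ N.IsRet u ∧
  (∃ Nr : RootedNet, IsRootedPartner X Nr N ∧
    ((u, v) ∈ Nr.edges ∨
      ∃ t : ℕ, Nr.IsCutEdge (Nr.root, t) ∧ Nr.IsCutEdge (t, u) ∧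
        Nr.IsCutEdge (t, v))) ∧
  ∃ M₀ M : MixedNet, DeleteUEdge N u v M₀ ∧ SuppressVertexAt M₀ u w₁ w₂ M ∧
    SubdivideAttach M u' v f N'

/-- Cut edge transfer (CET) on semi-directed networks on `X`. -/
def MixedNet.CET (X : Finset ℕ) (N N' : MixedNet) : Prop :=
  ∃ u v w₁ w₂ u' : ℕ, ∃ f : Sym2 ℕ, MixedNet.CETWitness X N N' u v w₁ w₂ u' f

/-- A CET₁ is a CET whose recipient edge is incident with one of the two donor
edges. -/
def MixedNet.CET1 (X : Finset ℕ) (N N' : MixedNet) : Prop :=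
  ∃ u v w₁ w₂ u' : ℕ, ∃ f : Sym2 ℕ,
    MixedNet.CETWitness X N N' u v w₁ w₂ u' f ∧ (w₁ ∈ f ∨ w₂ ∈ f)

/-- The CET with the given witness data changes the location of a pair of
parallel edges: its two donor edges are edges of a 3-cycle and its recipient
edge is an edge of a 2-cycle. -/
def ChangesParallel (N : MixedNet) (u w₁ w₂ : ℕ) (f : Sym2 ℕ) : Prop :=
  (∃ c : List ℕ, IsCycleIn N.underlying c ∧ c.length = 3 ∧
    s(u, w₁) ∈ cycleEdges c ∧ s(u, w₂) ∈ cycleEdges c) ∧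
  (∃ c : List ℕ, IsCycleIn N.underlying c ∧ c.length = 2 ∧ f ∈ cycleEdges c)

/-- The CET with the given witness data exchanges a loop for two pairs of
parallel edges or vice versa. -/
def ExchangesLoop (N : MixedNet) (u w₁ w₂ : ℕ) (f : Sym2 ℕ) : Prop :=
  ((∃ c : List ℕ, IsCycleIn N.underlying c ∧ c.length = 3 ∧
      s(u, w₁) ∈ cycleEdges c ∧ s(u, w₂) ∈ cycleEdges c) ∧
    f.IsDiag ∧ f ∈ N.underlying) ∨
  (w₁ = w₂ ∧
    (∃ c : List ℕ, IsCycleIn N.underlying c ∧ c.length = 2 ∧ f ∈ cycleEdges c))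

/-- CET⁻: remove a reticulation. Either delete the vertex carrying a loop (and
suppress the resulting degree-two vertex), or undirect the second edge directed
into `v`, delete the reticulation edge `(u,v)` and suppress `u` and `v`. -/
def MixedNet.CETminus (X : Finset ℕ) (N N' : MixedNet) : Prop :=
  IsSemiDirected X N ∧ IsSemiDirected X N' ∧
  ((∃ u w a b : ℕ, ∃ K : MixedNet,
      (u, u) ∈ N.dedges ∧
      K.verts = N.verts.erase u ∧
      ((s(u, w) ∈ N.uedges ∧ K.uedges = N.uedges.erase s(u, w) ∧
          K.dedges = N.dedges.erase (u, u)) ∨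
       (∃ q : ℕ, ∃ D₀ : Multiset (ℕ × ℕ),
          N.dedges.erase (u, u) = (u, w) ::ₘ (q, w) ::ₘ D₀ ∧
          K.dedges = D₀ ∧ K.uedges = s(q, w) ::ₘ N.uedges)) ∧
      SuppressVertexAt K w a b N') ∨
   (∃ u v p a b a' b' : ℕ, ∃ K K' : MixedNet, ∃ D₀ : Multiset (ℕ × ℕ),
      u ≠ v ∧ ¬ N.IsRet u ∧
      N.dedges = (u, v) ::ₘ (p, v) ::ₘ D₀ ∧
      K.verts = N.verts ∧ K.dedges = D₀ ∧ K.uedges = s(p, v) ::ₘ N.uedges ∧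
      SuppressVertexAt K u a b K' ∧ SuppressVertexAt K' v a' b' N'))

/-- Subdivide an edge of `N` with the fresh vertex `v`, giving `K`.
Subdividing a directed edge `(a,b)` gives an undirected edge `{a,v}` and a
directed edge `(v,b)`; subdividing a loop `(w,w)` gives two parallel edges
directed into `w`. -/
def Subdivide (N : MixedNet) (v : ℕ) (K : MixedNet) : Prop :=
  v ∉ N.verts ∧ K.verts = insert v N.verts ∧
  ((∃ a b U₀, N.uedges = s(a, b) ::ₘ U₀ ∧
      K.uedges = s(a, v) ::ₘ s(v, b) ::ₘ U₀ ∧ K.dedges = N.dedges) ∨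
   (∃ a b D₀, N.dedges = (a, b) ::ₘ D₀ ∧ a ≠ b ∧
      K.dedges = (v, b) ::ₘ D₀ ∧ K.uedges = s(a, v) ::ₘ N.uedges) ∨
   (∃ w D₀, N.dedges = (w, w) ::ₘ D₀ ∧
      K.dedges = (v, w) ::ₘ (v, w) ::ₘ D₀ ∧ K.uedges = N.uedges))

/-- CET⁺: add a reticulation, either (i) subdivide an edge with `v`, attach a
new vertex `u` by an undirected edge and add a directed loop at `u`, or (ii)
subdivide an edge with `v`, subdivide an edge of the result with `u`, add the
directed edge `(u,v)` and direct one of the two other edges incident with `v`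
into `v` (provided the result is a semi-directed network on `X`). -/
def MixedNet.CETplus (X : Finset ℕ) (N N' : MixedNet) : Prop :=
  IsSemiDirected X N ∧ IsSemiDirected X N' ∧
  ∃ u v : ℕ, ∃ K : MixedNet, Subdivide N v K ∧ u ≠ v ∧
  ((u ∉ K.verts ∧ N'.verts = insert u K.verts ∧
      N'.uedges = s(u, v) ::ₘ K.uedges ∧ N'.dedges = (u, u) ::ₘ K.dedges) ∨
   (∃ K' : MixedNet, Subdivide K u K' ∧ N'.verts = K'.verts ∧
      ∃ w : ℕ, ∃ U₀ : Multiset (Sym2 ℕ), K'.uedges = s(w, v) ::ₘ U₀ ∧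
        N'.uedges = U₀ ∧ N'.dedges = (u, v) ::ₘ (w, v) ::ₘ K'.dedges))

/-- An extended CET: a single CET, CET⁺ or CET⁻. -/
def ExtCET (X : Finset ℕ) (N N' : MixedNet) : Prop :=
  MixedNet.CET X N N' ∨ MixedNet.CETplus X N N' ∨ MixedNet.CETminus X N N'

/-- The leaves `y 1, …, y m` form a caterpillar hanging below the vertex `v`. -/
def CatBelow (N : RootedNet) (v : ℕ) (m : ℕ) (y : ℕ → ℕ) : Prop :=
  1 ≤ m ∧
  ((m = 1 ∧ (v, y 1) ∈ N.edges) ∨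
   (2 ≤ m ∧ ∃ p : ℕ → ℕ,
      (∀ i, 1 ≤ i → i ≤ m → (p i, y i) ∈ N.edges) ∧
      p 1 = p 2 ∧
      (∀ i, 2 ≤ i → i + 1 ≤ m → (p (i + 1), p i) ∈ N.edges) ∧
      (v, p m) ∈ N.edges))

/-- `x` enumerates the `n`-element leaf set `X` as `x 1, …, x n`. -/
def IsEnum (X : Finset ℕ) (n : ℕ) (x : ℕ → ℕ) : Prop :=
  (∀ i, 1 ≤ i → i ≤ n → x i ∈ X) ∧
  (∀ a ∈ X, ∃ i, 1 ≤ i ∧ i ≤ n ∧ x i = a) ∧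
  (∀ i j, 1 ≤ i → i ≤ n → 1 ≤ j → j ≤ n → x i = x j → i = j)

/-- `N` is the rooted level-1 network on `X = {x 1, …, x n}` with exactly `k`
reticulations in standard form. -/
def InStandardForm (X : Finset ℕ) (n k : ℕ) (x : ℕ → ℕ) (N : RootedNet) : Prop :=
  N.IsPhylo X ∧ Level1 N.underlying ∧ N.numRet = k ∧ n = X.card ∧
  ((k = 0 ∧ CatBelow N N.root n x) ∨
   (1 ≤ k ∧ ∃ u v p : ℕ → ℕ,
      (∀ i, 1 ≤ i → i ≤ k →
        IsCycleIn N.underlying [u i, p i, v i] ∧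
        (u i, p i) ∈ N.edges ∧ (u i, v i) ∈ N.edges ∧ (p i, v i) ∈ N.edges ∧
        N.inDeg (v i) = 2) ∧
      (∀ c : List ℕ, IsCycleIn N.underlying c →
        ∃ i, 1 ≤ i ∧ i ≤ k ∧ cycleEdges c = cycleEdges [u i, p i, v i]) ∧
      (∀ i j, 1 ≤ i → i ≤ k → 1 ≤ j → j ≤ k →
        cycleEdges [u i, p i, v i] = cycleEdges [u j, p j, v j] → i = j) ∧
      (∀ i, 1 ≤ i → i ≤ k → (p i, x i) ∈ N.edges) ∧
      (N.root, u 1) ∈ N.edges ∧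
      (∀ i, 1 ≤ i → i + 1 ≤ k → (v i, u (i + 1)) ∈ N.edges) ∧
      CatBelow N (v k) (n - k) (fun j => x (k + j))))

/-- `N` is of standard shape: it is in standard form up to a permutation of its
leaf labels, i.e. in standard form for some enumeration of `X`. -/
def StandardShape (X : Finset ℕ) (k : ℕ) (N : RootedNet) : Prop :=
  ∃ x : ℕ → ℕ, IsEnum X X.card x ∧ InStandardForm X X.card k x N

/-- The extended CET distance within the collection of networks satisfying `P`
(measured between isomorphism classes). -/
noncomputable def extDist (X : Finset ℕ) (P : MixedNet → Prop)
    (N N' : MixedNet) : ℕ :=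
  sInf {m : ℕ | ∃ L : List MixedNet, L.Chain' (ExtCET X) ∧ L.head? = some N ∧
    (∃ M, L.getLast? = some M ∧ MixedNet.Iso X M N') ∧ (∀ K ∈ L, P K) ∧
    L.length = m + 1}

section ListLemmas
open List Relation


variable {r : ℕ → ℕ → Prop}

/-- junction edge list -/
def jn (x : ℕ) (l : List ℕ) : List (Sym2 ℕ) := List.zipWith (fun a b => s(a,b)) [x] l

def pe (l : List ℕ) : List (Sym2 ℕ) := List.zipWith (fun a b => s(a,b)) l l.tail

def pd (l : List ℕ) : List (ℕ × ℕ) := List.zipWith Prod.mk l l.tail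

@[simp] lemma jn_nil (x : ℕ) : jn x [] = [] := rfl
@[simp] lemma jn_cons (x b : ℕ) (t : List ℕ) : jn x (b :: t) = [s(x,b)] := rfl
@[simp] lemma pe_nil : pe [] = [] := rfl
@[simp] lemma pe_single (a : ℕ) : pe [a] = [] := rfl
@[simp] lemma pe_cons₂ (a b : ℕ) (l : List ℕ) : pe (a::b::l) = s(a,b) :: pe (b::l) := rfl
@[simp] lemma pd_nil : pd [] = [] := rfl
@[simp] lemma pd_single (a : ℕ) : pd [a] = [] := rfl
@[simp] lemma pd_cons₂ (a b : ℕ) (l : List ℕ) : pd (a::b::l) = (a,b) :: pd (b::l) := rfl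

lemma pe_cons (a : ℕ) (l : List ℕ) : pe (a :: l) = jn a l ++ pe l := by cases l <;> rfl

lemma pe_eq_map_pd : ∀ (l : List ℕ), pe l = (pd l).map (fun e => s(e.1, e.2))
  | [] => rfl
  | [_] => rfl
  | a :: b :: l => by
      simp only [pe_cons₂, pd_cons₂, List.map_cons]
      exact congrArg _ (pe_eq_map_pd (b :: l))

lemma pe_append : ∀ (a : ℕ) (t l₂ : List ℕ),
    pe ((a :: t) ++ l₂) = pe (a :: t) ++ jn (t.getLastD a) l₂ ++ pe l₂ := by
  intro a t
  induction t generalizing a with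
  | nil => intro l₂; simpa using (pe_cons a l₂)
  | cons b t' ih =>
      intro l₂
      have h := ih b l₂
      simp only [cons_append] at h ⊢
      simp only [pe_cons₂, h, getLastD_cons, cons_append]

lemma pe_append' (l₁ l₂ : List ℕ) (h : l₁ ≠ []) (d : ℕ) :
    pe (l₁ ++ l₂) = pe l₁ ++ jn (l₁.getLastD d) l₂ ++ pe l₂ := by
  cases l₁ with
  | nil => exact absurd rfl h
  | cons a t => rw [pe_append a t l₂, getLastD_cons]

lemma zip_last : ∀ (l : List ℕ) (x a : ℕ),
    List.zipWith (fun p q => s(p,q)) (x :: l) (l ++ [a])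
      = List.zipWith (fun p q => s(p,q)) (x :: l) l ++ [s(l.getLastD x, a)] := by
  intro l
  induction l with
  | nil => intro x a; rfl
  | cons b t ih =>
      intro x a
      simp only [List.cons_append, List.append_eq, List.zipWith_cons_cons,
        List.getLastD_cons, ih b a]

lemma cycleEdges_cons (a : ℕ) (l : List ℕ) :
    cycleEdges (a :: l) = ↑(pe (a::l) ++ [s(l.getLastD a, a)]) := by
  unfold cycleEdges
  rw [show (a :: l).rotate 1 = l ++ [a] by
    simpa using List.rotate_cons_succ l a 0]
  congr 1
  exact zip_last l a a

lemma pd_sublist : ∀ {l : List ℕ} {x y : ℕ}, (x,y) ∈ pd l → [x,y] <+ l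
  | [], _, _, h => by simp at h
  | [_], _, _, h => by simp at h
  | a :: b :: l, x, y, h => by
      rcases (by simpa [Prod.ext_iff] using h : (x = a ∧ y = b) ∨ (x,y) ∈ pd (b :: l)) with ⟨rfl, rfl⟩ | h
      · exact (((List.nil_sublist l).cons₂ _).cons₂ _)
      · exact (pd_sublist h).cons a

lemma chain'_pd : ∀ {l : List ℕ}, Chain' r l → ∀ {x y : ℕ}, (x,y) ∈ pd l → r x y
  | [], _, _, _, h => by simp at h
  | [_], _, _, _, h => by simp at h
  | a :: b :: l, hc, x, y, h => by
      rcases (by simpa [Prod.ext_iff] using h : (x = a ∧ y = b) ∨ (x,y) ∈ pd (b :: l)) with ⟨rfl, rfl⟩ | h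
      · exact (List.isChain_cons_cons.mp hc).1
      · exact chain'_pd (List.isChain_cons_cons.mp hc).2 h

lemma pd_mem_fst {l : List ℕ} {x y : ℕ} (h : (x,y) ∈ pd l) : x ∈ l :=
  (pd_sublist h).subset (by simp)

lemma pd_mem_snd {l : List ℕ} {x y : ℕ} (h : (x,y) ∈ pd l) : y ∈ l :=
  (pd_sublist h).subset (by simp)

lemma pd_mem_snd_tail : ∀ {a : ℕ} {t : List ℕ} {x y : ℕ}, (x,y) ∈ pd (a :: t) → y ∈ t := by
  intro a t x y h
  have := pd_sublist h
  cases this with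
  | cons _ h' => exact (h'.subset (by simp) : y ∈ t)
  | cons_cons _ h' => exact h'.subset (by simp)

lemma pd_nodup : ∀ {l : List ℕ}, l.Nodup → (pd l).Nodup
  | [], _ => by simp
  | [_], _ => by simp
  | a :: b :: l, h => by
      simp only [pd_cons₂, List.nodup_cons]
      refine ⟨fun hmem => ?_, pd_nodup (List.nodup_cons.mp h).2⟩
      exact (List.nodup_cons.mp h).1 (pd_mem_fst hmem)

lemma pe_reverse : ∀ (l : List ℕ), (↑(pe l.reverse) : Multiset (Sym2 ℕ)) = ↑(pe l)
  | [] => rfl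
  | [_] => rfl
  | a :: b :: t => by
      have h1 : (a :: b :: t).reverse = (b :: t).reverse ++ [a] := by simp
      have h2 : (b :: t).reverse ≠ [] := by simp
      rw [h1, pe_append' _ _ h2 0]
      have h3 : (b :: t).reverse.getLastD 0 = b := by
        rw [List.reverse_cons, List.getLastD_concat]
      rw [h3]
      have h4 : (↑(pe (b :: t).reverse) : Multiset (Sym2 ℕ)) = ↑(pe (b :: t)) :=
        pe_reverse (b :: t)
      simp only [jn_cons, pe_single, List.append_nil, pe_cons₂]
      have hsplit : (↑(pe (b :: t).reverse ++ [s(b,a)]) : Multiset (Sym2 ℕ))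
          = ↑(pe (b :: t).reverse) + ↑([s(b,a)] : List (Sym2 ℕ)) := by
        exact congrArg _ rfl
      rw [hsplit, h4]
      have hswap : s(b, a) = s(a, b) := Sym2.eq_swap
      rw [show ((s(a,b) :: pe (b::t) : List (Sym2 ℕ)) : Multiset (Sym2 ℕ)) = s(a,b) ::ₘ ↑(pe (b::t)) from rfl]
      rw [add_comm, ← Multiset.singleton_add, hswap]
      rfl

lemma chain'_mem_transGen_head : ∀ {a : ℕ} {t : List ℕ}, Chain' r (a :: t) → ∀ {y}, y ∈ t → TransGen r a y := by
  intro a t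
  induction t generalizing a with
  | nil => intro _ y hy; simp at hy
  | cons b t' ih =>
      intro hc y hy
      rcases List.mem_cons.mp hy with rfl | hy
      · exact TransGen.single (List.isChain_cons_cons.mp hc).1
      · exact TransGen.head (List.isChain_cons_cons.mp hc).1 (ih (List.isChain_cons_cons.mp hc).2 hy)

lemma chain'_sublist_transGen : ∀ {l : List ℕ}, Chain' r l → ∀ {x y : ℕ}, [x,y] <+ l → TransGen r x y := by
  intro l
  induction l with
  | nil => intro _ x y h; simp at h
  | cons a t ih =>
      intro hc x y h
      cases h with
      | cons _ h' => exact ih hc.tail h'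
      | cons_cons _ h' =>
          exact chain'_mem_transGen_head hc (h'.subset (by simp))

lemma chain'_nodup (hw : ∀ x, ¬ TransGen r x x) : ∀ {l : List ℕ}, Chain' r l → l.Nodup := by
  intro l
  induction l with
  | nil => intro _; simp
  | cons a t ih =>
      intro hc
      refine List.nodup_cons.mpr ⟨fun ha => ?_, ih hc.tail⟩
      exact hw a (chain'_mem_transGen_head hc ha)

lemma chain'_reflTransGen_getLastD : ∀ {l : List ℕ}, Chain' r l → ∀ {x}, x ∈ l → ∀ d, ReflTransGen r x (l.getLastD d) := by
  intro l
  induction l with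
  | nil => intro _ x hx; simp at hx
  | cons a t ih =>
      intro hc x hx d
      rw [List.getLastD_cons]
      rcases List.mem_cons.mp hx with rfl | hx
      · cases t with
        | nil => exact ReflTransGen.refl
        | cons b t' =>
            exact ReflTransGen.head (List.isChain_cons_cons.mp hc).1
              (ih (List.isChain_cons_cons.mp hc).2 (List.mem_cons_self) _)
      · exact ih hc.tail hx _

lemma chain'_out : ∀ {l : List ℕ}, Chain' r l → ∀ {x}, x ∈ l → ∀ d, x ≠ l.getLastD d →
    ∃ y, r x y ∧ s(x,y) ∈ pe l := by
  intro l
  induction l with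
  | nil => intro _ x hx; simp at hx
  | cons a t ih =>
      intro hc x hx d hne
      rw [List.getLastD_cons] at hne
      cases t with
      | nil =>
          simp only [List.mem_singleton] at hx
          exact absurd hx (by simpa using hne)
      | cons b t' =>
          rcases List.mem_cons.mp hx with rfl | hx
          · exact ⟨b, (List.isChain_cons_cons.mp hc).1, by simp⟩
          · obtain ⟨y, hy1, hy2⟩ := ih hc.tail hx _ hne
            exact ⟨y, hy1, by simp [hy2]⟩

lemma pe_mem_endpoints {l : List ℕ} {e : Sym2 ℕ} (h : e ∈ pe l) :
    ∃ x y, e = s(x,y) ∧ x ∈ l ∧ y ∈ l := by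
  rw [pe_eq_map_pd] at h
  obtain ⟨⟨x, y⟩, hmem, rfl⟩ := List.mem_map.mp h
  exact ⟨x, y, rfl, pd_mem_fst hmem, pd_mem_snd hmem⟩

lemma exists_last_split (p : ℕ → Prop) [DecidablePred p] :
    ∀ (l : List ℕ), (∃ x ∈ l, p x) → ∃ s z t, l = s ++ z :: t ∧ p z ∧ ∀ x ∈ t, ¬ p x := by
  intro l
  induction l with
  | nil => intro h; simp at h
  | cons a t ih =>
      intro h
      by_cases hex : ∃ x ∈ t, p x
      · obtain ⟨s, z, t', rfl, hz, ht⟩ := ih hex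
        exact ⟨a :: s, z, t', rfl, hz, ht⟩
      · push_neg at hex
        obtain ⟨x, hx, hpx⟩ := h
        rcases List.mem_cons.mp hx with rfl | hx
        · exact ⟨[], x, t, rfl, hpx, hex⟩
        · exact absurd hpx (hex x hx)

lemma two_mem_card {α : Type*} [DecidableEq α] {s : Multiset α} {a b : α}
    (h1 : a ∈ s) (h2 : b ∈ s) (hne : a ≠ b) : 2 ≤ Multiset.card s := by
  obtain ⟨s', rfl⟩ := Multiset.exists_cons_of_mem h1
  have hb : b ∈ s' := by
    rcases Multiset.mem_cons.mp h2 with rfl | h; · exact absurd rfl hne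
    · assumption
  obtain ⟨s'', rfl⟩ := Multiset.exists_cons_of_mem hb
  simp

lemma cycleEdges_endpoints {c : List ℕ} {e : Sym2 ℕ} (h : e ∈ cycleEdges c) :
    ∀ x ∈ e, x ∈ c := by
  cases c with
  | nil => simp [cycleEdges] at h
  | cons a l =>
      rw [cycleEdges_cons] at h
      rw [Multiset.mem_coe, List.mem_append] at h
      rcases h with h | h
      · obtain ⟨x, y, rfl, hx, hy⟩ := pe_mem_endpoints h
        intro z hz
        rcases Sym2.mem_iff.mp hz with rfl | rfl <;> assumption
      · simp only [List.mem_singleton] at h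
        subst h
        intro z hz
        rcases Sym2.mem_iff.mp hz with h1 | h1 <;> rw [h1]
        · exact List.getLastD_mem_cons
        · exact List.mem_cons_self


end ListLemmas
section NetLemmas
open List Relation

/-- The directed edge relation of a rooted network. -/
def RootedNet.Rel (N : RootedNet) : ℕ → ℕ → Prop := fun a b => (a, b) ∈ N.edges

variable {N : RootedNet} {X : Finset ℕ}

lemma head?_mem {l : List ℕ} {a : ℕ} (h : l.head? = some a) : a ∈ l :=
  List.mem_of_mem_head? (by rw [h]; rfl)

lemma outDeg_pos_of_edge {u w : ℕ} (h : (u, w) ∈ N.edges) : N.outDeg u ≠ 0 := by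
  have hm : (u, w) ∈ N.edges.filter (fun e => e.1 = u) := Multiset.mem_filter.mpr ⟨h, rfl⟩
  intro h0
  rw [RootedNet.outDeg, Multiset.card_eq_zero] at h0
  rw [h0] at hm
  exact absurd hm (Multiset.notMem_zero _)

lemma inDeg_pos_of_edge {u w : ℕ} (h : (u, w) ∈ N.edges) : N.inDeg w ≠ 0 := by
  have hm : (u, w) ∈ N.edges.filter (fun e => e.2 = w) := Multiset.mem_filter.mpr ⟨h, rfl⟩
  intro h0
  rw [RootedNet.inDeg, Multiset.card_eq_zero] at h0
  rw [h0] at hm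
  exact absurd hm (Multiset.notMem_zero _)

lemma parent_of_ne_root (hphy : N.IsPhylo X) {v : ℕ} (hv : v ∈ N.verts) (hvr : v ≠ N.root) :
    ∃ u, (u, v) ∈ N.edges := by
  obtain ⟨-, -, -, -, -, -, -, hleaf, hleafin, hclass⟩ := hphy
  have hpos : N.inDeg v ≠ 0 := by
    by_cases h0 : N.outDeg v = 0
    · rw [hleafin v hv h0]; omega
    · rcases hclass v hv hvr h0 with ⟨h1, -⟩ | ⟨h1, -⟩ <;> omega
  have hcard : 0 < Multiset.card (N.edges.filter (fun e => e.2 = v)) := by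
    rw [RootedNet.inDeg] at hpos; omega
  obtain ⟨e, he⟩ := Multiset.card_pos_iff_exists_mem.mp hcard
  obtain ⟨a, b⟩ := e
  obtain ⟨he1, he2⟩ := Multiset.mem_filter.mp he
  simp only at he2
  subst he2
  exact ⟨a, he1⟩

lemma eq_root_of_inDeg_zero (hphy : N.IsPhylo X) {v : ℕ} (hv : v ∈ N.verts)
    (h0 : N.inDeg v = 0) : v = N.root := by
  by_contra hne
  obtain ⟨u, hu⟩ := parent_of_ne_root hphy hv hne
  exact inDeg_pos_of_edge hu h0

lemma exists_path (hphy : N.IsPhylo X) {v : ℕ} (hv : v ∈ N.verts) :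
    ∃ p : List ℕ, p.Chain' N.Rel ∧ p.head? = some N.root ∧ p.getLast? = some v ∧ p.Nodup := by
  classical
  have hends := hphy.2.2.1
  have hacyc := hphy.2.2.2.1
  set m : ℕ → ℕ := fun w => (N.verts.filter (fun x => Relation.TransGen N.Rel x w)).card with hm
  have hstep : ∀ w ∈ N.verts, w ≠ N.root → ∃ u ∈ N.verts, (u, w) ∈ N.edges ∧ m u < m w := by
    intro w hw hwr
    obtain ⟨u, hu⟩ := parent_of_ne_root hphy hw hwr
    have huv : u ∈ N.verts := (hends _ hu).1
    refine ⟨u, huv, hu, ?_⟩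
    apply Finset.card_lt_card
    constructor
    · intro x hx
      obtain ⟨hx1, hx2⟩ := Finset.mem_filter.mp hx
      exact Finset.mem_filter.mpr ⟨hx1, hx2.tail hu⟩
    · intro hsub
      have humem : u ∈ N.verts.filter (fun x => Relation.TransGen N.Rel x w) :=
        Finset.mem_filter.mpr ⟨huv, Relation.TransGen.single hu⟩
      have := Finset.mem_filter.mp (hsub humem)
      exact hacyc u this.2
  have H : ∀ n, ∀ w, w ∈ N.verts → m w ≤ n →
      ∃ p : List ℕ, p.Chain' N.Rel ∧ p.head? = some N.root ∧ p.getLast? = some w := by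
    intro n
    induction n with
    | zero =>
        intro w hw hmw
        by_cases hr : w = N.root
        · subst hr; exact ⟨[N.root], List.isChain_singleton _, rfl, rfl⟩
        · obtain ⟨u, -, -, hlt⟩ := hstep w hw hr; omega
    | succ n ih =>
        intro w hw hmw
        by_cases hr : w = N.root
        · subst hr; exact ⟨[N.root], List.isChain_singleton _, rfl, rfl⟩
        · obtain ⟨u, huv, hedge, hlt⟩ := hstep w hw hr
          obtain ⟨p, hc, hh, hl⟩ := ih u huv (by omega)
          refine ⟨p ++ [w], ?_, ?_, List.getLast?_concat⟩
          · refine List.isChain_append.mpr ⟨hc, List.isChain_singleton _, ?_⟩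
            intro x hx y hy
            simp only [List.head?_cons, Option.mem_some_iff] at hy
            rw [hl, Option.mem_some_iff] at hx
            subst hx; subst hy
            exact hedge
          · obtain ⟨ys, rfl⟩ := List.head?_eq_some_iff.mp hh
            rfl
  obtain ⟨p, hc, hh, hl⟩ := H (m v) v hv le_rfl
  exact ⟨p, hc, hh, hl, chain'_nodup hacyc hc⟩

lemma ret_parents {v : ℕ} (h2 : N.inDeg v = 2) :
    ∃ u₁ u₂, N.edges.filter (fun e => e.2 = v) = {(u₁, v), (u₂, v)} := by
  have hc : Multiset.card (N.edges.filter (fun e => e.2 = v)) = 2 := h2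
  obtain ⟨x, y, hxy⟩ := Multiset.card_eq_two.mp hc
  have hx : x ∈ N.edges.filter (fun e => e.2 = v) := by rw [hxy]; simp
  have hy : y ∈ N.edges.filter (fun e => e.2 = v) := by rw [hxy]; simp
  obtain ⟨a, b⟩ := x
  obtain ⟨c, d⟩ := y
  have hb : b = v := by simpa using (Multiset.mem_filter.mp hx).2
  have hd : d = v := by simpa using (Multiset.mem_filter.mp hy).2
  subst hb; subst hd
  exact ⟨a, c, hxy⟩

lemma no_two_cycle (hL : Level1 N.underlying) {a b : ℕ} (hne : a ≠ b)
    (h : ({(a, b), (a, b)} : Multiset (ℕ × ℕ)) ≤ N.edges) : False := by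
  have hcyc : IsCycleIn N.underlying [a, b] := by
    refine ⟨by simp, by simp [hne], ?_⟩
    have h2 : cycleEdges [a, b] = ↑([s(a,b)] ++ [s(b,a)]) := by
      rw [show ([a, b] : List ℕ) = a :: [b] from rfl, cycleEdges_cons]
      rfl
    rw [h2]
    have : (↑([s(a,b)] ++ [s(b,a)]) : Multiset (Sym2 ℕ)) = {s(a,b), s(a,b)} := by
      have hswap : s(b, a) = s(a, b) := Sym2.eq_swap
      simp [hswap]
      rfl
    rw [this]
    have hmap := Multiset.map_le_map (f := fun e : ℕ × ℕ => s(e.1, e.2)) h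
    simpa [RootedNet.underlying] using hmap
  have := hL.1 [a, b] hcyc
  simp at this

lemma parents_ne (hphy : N.IsPhylo X) (hL : Level1 N.underlying) {v : ℕ}
    (h2 : N.inDeg v = 2) :
    ∃ u₁ u₂, u₁ ≠ u₂ ∧ N.edges.filter (fun e => e.2 = v) = {(u₁, v), (u₂, v)} := by
  have hacyc := hphy.2.2.2.1
  obtain ⟨u₁, u₂, hfilt⟩ := ret_parents h2
  refine ⟨u₁, u₂, ?_, hfilt⟩
  rintro rfl
  have hsub : ({(u₁, v), (u₁, v)} : Multiset (ℕ × ℕ)) ≤ N.edges := by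
    rw [← hfilt]; exact Multiset.filter_le _ _
  have hmemE : (u₁, v) ∈ N.edges := by
    have : (u₁, v) ∈ ({(u₁, v), (u₁, v)} : Multiset (ℕ × ℕ)) := by simp
    exact Multiset.subset_of_le hsub this
  have hne : u₁ ≠ v := by
    rintro rfl
    exact hacyc u₁ (Relation.TransGen.single hmemE)
  exact no_two_cycle hL hne hsub

lemma exists_cycle (hphy : N.IsPhylo X) {u₁ u₂ v : ℕ}
    (h1 : (u₁, v) ∈ N.edges) (h2 : (u₂, v) ∈ N.edges) (hne : u₁ ≠ u₂) :
    ∃ c : List ℕ, IsCycleIn N.underlying c ∧ v ∈ c ∧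
      (∀ x ∈ c, x = v ∨ ReflTransGen N.Rel x u₁ ∨ ReflTransGen N.Rel x u₂) ∧
      s(u₁, v) ∈ cycleEdges c ∧ s(u₂, v) ∈ cycleEdges c ∧
      (∀ e ∈ cycleEdges c, v ∈ e → e = s(u₁, v) ∨ e = s(u₂, v)) ∧
      (∀ x ∈ c, x ≠ v → ∃ y, (x, y) ∈ N.edges ∧ s(x, y) ∈ cycleEdges c) := by
  classical
  have hends := hphy.2.2.1
  have hacyc := hphy.2.2.2.1
  obtain ⟨p₁, hc₁, hh₁, hl₁, hnd₁⟩ := exists_path hphy (hends _ h1).1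
  obtain ⟨p₂, hc₂, hh₂, hl₂, hnd₂⟩ := exists_path hphy (hends _ h2).1
  -- v is on neither path
  have hvp : ∀ (p : List ℕ) (u : ℕ), p.Chain' N.Rel → p.getLast? = some u →
      (u, v) ∈ N.edges → v ∉ p := by
    intro p u hc hl hedge hvmem
    have hrt : ReflTransGen N.Rel v u := by
      have h := chain'_reflTransGen_getLastD hc hvmem 0
      rwa [List.getLastD_eq_getLast?, hl] at h
    exact hacyc v (Relation.TransGen.tail' hrt hedge)
  have hvp₁ : v ∉ p₁ := hvp p₁ u₁ hc₁ hl₁ h1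
  have hvp₂ : v ∉ p₂ := hvp p₂ u₂ hc₂ hl₂ h2
  -- split p₁ at the last vertex that is also on p₂
  obtain ⟨sdl, z, t₁, hps, hzp₂, ht₁⟩ := exists_last_split (fun x => x ∈ p₂) p₁
    ⟨N.root, head?_mem hh₁, head?_mem hh₂⟩
  obtain ⟨s₂, t₂, hq₂s⟩ := List.append_of_mem hzp₂
  set q₁ : List ℕ := z :: t₁ with hq₁def
  set q₂ : List ℕ := z :: t₂ with hq₂def
  have hq₁suf : q₁ <:+ p₁ := ⟨sdl, hps.symm⟩
  have hq₂suf : q₂ <:+ p₂ := ⟨s₂, hq₂s.symm⟩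
  have hq₁c : q₁.Chain' N.Rel := hc₁.suffix hq₁suf
  have hq₂c : q₂.Chain' N.Rel := hc₂.suffix hq₂suf
  have hq₁nd : q₁.Nodup := hnd₁.sublist hq₁suf.sublist
  have hq₂nd : q₂.Nodup := hnd₂.sublist hq₂suf.sublist
  have hq₁l : q₁.getLast? = some u₁ := by
    rw [hps, List.getLast?_append] at hl₁
    rcases Option.or_eq_some_iff.mp hl₁ with h | ⟨h, -⟩
    · exact h
    · simp [hq₁def] at h
  have hq₂l : q₂.getLast? = some u₂ := by
    rw [hq₂s, List.getLast?_append] at hl₂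
    rcases Option.or_eq_some_iff.mp hl₂ with h | ⟨h, -⟩
    · exact h
    · simp [hq₂def] at h
  have hq₁sub : ∀ x ∈ q₁, x ∈ p₁ := fun x hx => hq₁suf.sublist.subset hx
  have hq₂sub : ∀ x ∈ q₂, x ∈ p₂ := fun x hx => hq₂suf.sublist.subset hx
  have hvq₁ : v ∉ q₁ := fun h => hvp₁ (hq₁sub v h)
  have hvq₂ : v ∉ q₂ := fun h => hvp₂ (hq₂sub v h)
  -- the cycle
  obtain ⟨r₂, hr₂⟩ : ∃ r₂, q₂.reverse = u₂ :: r₂ := by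
    have : q₂.reverse.head? = some u₂ := by rw [List.head?_reverse]; exact hq₂l
    exact List.head?_eq_some_iff.mp this
  set w : List ℕ := q₂.reverse ++ t₁ with hwdef
  set c : List ℕ := v :: w with hcdef
  have hwcons : w = u₂ :: (r₂ ++ t₁) := by rw [hwdef, hr₂]; rfl
  -- getLastD w v = u₁
  have hwlast : w.getLastD v = u₁ := by
    rcases t₁ with _ | ⟨b, t₁'⟩
    · have hz : z = u₁ := by simpa [hq₁def] using hq₁l
      rw [hwdef]
      simp only [List.append_nil, List.getLastD_eq_getLast?, List.getLast?_reverse]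
      rw [hq₂def]
      simp [hz]
    · rw [hwdef, List.getLastD_eq_getLast?, List.getLast?_append]
      have ht₁l : (b :: t₁').getLast? = some u₁ := by
        have := hq₁l
        rw [hq₁def, List.getLast?_cons_cons] at this
        exact this
      rw [ht₁l]
      rfl
  -- representation of the cycle edges
  have hrep : cycleEdges c = s(u₂, v) ::ₘ (s(u₁, v) ::ₘ ((↑(pe q₁) : Multiset (Sym2 ℕ)) + ↑(pe q₂))) := by
    rw [hcdef, cycleEdges_cons, hwlast]
    have hpec : pe (v :: w) = s(v, u₂) :: pe w := by
      rw [pe_cons, hwcons]; rfl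
    have hpew : pe w = pe q₂.reverse ++ pe q₁ := by
      rw [hwdef, pe_append' q₂.reverse t₁ (by rw [hr₂]; simp) z]
      have hgl : q₂.reverse.getLastD z = z := by
        rw [List.getLastD_eq_getLast?, List.getLast?_reverse, hq₂def]
        rfl
      rw [hgl, hq₁def, pe_cons]
      rw [List.append_assoc]
    rw [hpec, hpew]
    have e1 : (↑((s(v, u₂) :: (pe q₂.reverse ++ pe q₁)) ++ [s(u₁, v)]) : Multiset (Sym2 ℕ))
        = s(v, u₂) ::ₘ ((↑(pe q₂.reverse) + ↑(pe q₁)) + ↑([s(u₁, v)] : List (Sym2 ℕ))) := rfl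
    rw [e1, pe_reverse]
    have hswap : s(v, u₂) = s(u₂, v) := Sym2.eq_swap
    rw [hswap]
    congr 1
    have : (↑([s(u₁, v)] : List (Sym2 ℕ)) : Multiset (Sym2 ℕ)) = {s(u₁, v)} := rfl
    rw [this, show s(u₁, v) ::ₘ ((↑(pe q₁) : Multiset (Sym2 ℕ)) + ↑(pe q₂))
      = {s(u₁, v)} + ((↑(pe q₁) : Multiset (Sym2 ℕ)) + ↑(pe q₂)) from (Multiset.singleton_add _ _).symm]
    abel
  -- the directed edge list
  set dl : List (ℕ × ℕ) := (u₂, v) :: (u₁, v) :: (pd q₁ ++ pd q₂) with hdldef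
  have hdl_map : cycleEdges c = Multiset.map (fun e => s(e.1, e.2)) (↑dl : Multiset (ℕ × ℕ)) := by
    rw [hrep, hdldef]
    rw [Multiset.map_coe]
    simp only [List.map_cons, List.map_append]
    rw [← pe_eq_map_pd, ← pe_eq_map_pd]
    rfl
  have hdl_mem : ∀ e ∈ dl, e ∈ N.edges := by
    intro e he
    rw [hdldef] at he
    rcases List.mem_cons.mp he with rfl | he
    · exact h2
    rcases List.mem_cons.mp he with rfl | he
    · exact h1
    rcases List.mem_append.mp he with he | he
    · obtain ⟨a, b⟩ := e; exact chain'_pd hq₁c he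
    · obtain ⟨a, b⟩ := e; exact chain'_pd hq₂c he
  have hdl_nodup : dl.Nodup := by
    rw [hdldef]
    refine List.nodup_cons.mpr ⟨?_, List.nodup_cons.mpr ⟨?_, ?_⟩⟩
    · intro hmem
      rcases List.mem_cons.mp hmem with h | h
      · exact hne ((Prod.ext_iff.mp h).1.symm)
      rcases List.mem_append.mp h with h | h
      · exact hvq₁ (pd_mem_snd h)
      · exact hvq₂ (pd_mem_snd h)
    · intro hmem
      rcases List.mem_append.mp hmem with h | h
      · exact hvq₁ (pd_mem_snd h)
      · exact hvq₂ (pd_mem_snd h)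
    · refine List.Nodup.append (pd_nodup hq₁nd) (pd_nodup hq₂nd) ?_
      intro e he₁ he₂
      obtain ⟨a, b⟩ := e
      have hb₁ : b ∈ t₁ := pd_mem_snd_tail (by rw [hq₁def] at he₁; exact he₁)
      have hb₂ : b ∈ p₂ := hq₂sub b (pd_mem_snd he₂)
      exact ht₁ b hb₁ hb₂
  have hdl_le : (↑dl : Multiset (ℕ × ℕ)) ≤ N.edges := by
    rw [Multiset.le_iff_subset (Multiset.coe_nodup.mpr hdl_nodup)]
    intro e he
    exact hdl_mem e (Multiset.mem_coe.mp he)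
  have hce_le : cycleEdges c ≤ N.underlying := by
    rw [hdl_map, RootedNet.underlying]
    exact Multiset.map_le_map hdl_le
  -- nodup of the cycle
  have ht₁nd : t₁.Nodup := (List.nodup_cons.mp hq₁nd).2
  have hznt₁ : z ∉ t₁ := (List.nodup_cons.mp hq₁nd).1
  have hcnd : c.Nodup := by
    rw [hcdef]
    refine List.nodup_cons.mpr ⟨?_, ?_⟩
    · intro hmem
      rcases List.mem_append.mp hmem with h | h
      · exact hvq₂ (List.mem_reverse.mp h)
      · exact hvq₁ (List.mem_cons_of_mem z h)
    · refine List.Nodup.append (List.nodup_reverse.mpr hq₂nd) ht₁nd ?_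
      intro x hx₁ hx₂
      exact ht₁ x hx₂ (hq₂sub x (List.mem_reverse.mp hx₁))
  have hcyc : IsCycleIn N.underlying c := ⟨by rw [hcdef]; simp, hcnd, hce_le⟩
  -- membership facts
  have hmemc : ∀ x ∈ c, x = v ∨ x ∈ q₂ ∨ x ∈ q₁ := by
    intro x hx
    rw [hcdef] at hx
    rcases List.mem_cons.mp hx with rfl | hx
    · exact Or.inl rfl
    rcases List.mem_append.mp hx with h | h
    · exact Or.inr (Or.inl (List.mem_reverse.mp h))
    · exact Or.inr (Or.inr (List.mem_cons_of_mem z h))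
  have hq₁last : ∀ x ∈ q₁, ReflTransGen N.Rel x u₁ := by
    intro x hx
    have h := chain'_reflTransGen_getLastD hq₁c hx 0
    rwa [List.getLastD_eq_getLast?, hq₁l] at h
  have hq₂last : ∀ x ∈ q₂, ReflTransGen N.Rel x u₂ := by
    intro x hx
    have h := chain'_reflTransGen_getLastD hq₂c hx 0
    rwa [List.getLastD_eq_getLast?, hq₂l] at h
  refine ⟨c, hcyc, by rw [hcdef]; exact List.mem_cons_self, ?_, ?_, ?_, ?_, ?_⟩
  · -- P2
    intro x hx
    rcases hmemc x hx with rfl | hx | hx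
    · exact Or.inl rfl
    · exact Or.inr (Or.inr (hq₂last x hx))
    · exact Or.inr (Or.inl (hq₁last x hx))
  · -- s(u₁,v) mem
    rw [hrep]
    exact Multiset.mem_cons_of_mem (Multiset.mem_cons_self _ _)
  · -- s(u₂,v) mem
    rw [hrep]
    exact Multiset.mem_cons_self _ _
  · -- P3
    intro e he hv
    rw [hrep] at he
    rcases Multiset.mem_cons.mp he with rfl | he
    · exact Or.inr rfl
    rcases Multiset.mem_cons.mp he with rfl | he
    · exact Or.inl rfl
    exfalso
    rcases Multiset.mem_add.mp he with he | he
    · obtain ⟨x, y, rfl, hx, hy⟩ := pe_mem_endpoints (Multiset.mem_coe.mp he)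
      rcases Sym2.mem_iff.mp hv with rfl | rfl
      · exact hvq₁ hx
      · exact hvq₁ hy
    · obtain ⟨x, y, rfl, hx, hy⟩ := pe_mem_endpoints (Multiset.mem_coe.mp he)
      rcases Sym2.mem_iff.mp hv with rfl | rfl
      · exact hvq₂ hx
      · exact hvq₂ hy
  · -- P5
    intro x hx hxv
    rcases hmemc x hx with rfl | hx' | hx'
    · exact absurd rfl hxv
    · by_cases hxu : x = u₂
      · subst hxu
        refine ⟨v, h2, ?_⟩
        rw [hrep]; exact Multiset.mem_cons_self _ _
      · have hxne : x ≠ q₂.getLastD 0 := by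
          rw [List.getLastD_eq_getLast?, hq₂l]; exact hxu
        obtain ⟨y, hy1, hy2⟩ := chain'_out hq₂c hx' 0 hxne
        refine ⟨y, hy1, ?_⟩
        rw [hrep]
        refine Multiset.mem_cons_of_mem (Multiset.mem_cons_of_mem ?_)
        exact Multiset.mem_add.mpr (Or.inr (Multiset.mem_coe.mpr hy2))
    · by_cases hxu : x = u₁
      · subst hxu
        refine ⟨v, h1, ?_⟩
        rw [hrep]
        exact Multiset.mem_cons_of_mem (Multiset.mem_cons_self _ _)
      · have hxne : x ≠ q₁.getLastD 0 := by
          rw [List.getLastD_eq_getLast?, hq₁l]; exact hxu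
        obtain ⟨y, hy1, hy2⟩ := chain'_out hq₁c hx' 0 hxne
        refine ⟨y, hy1, ?_⟩
        rw [hrep]
        refine Multiset.mem_cons_of_mem (Multiset.mem_cons_of_mem ?_)
        exact Multiset.mem_add.mpr (Or.inl (Multiset.mem_coe.mpr hy2))

end NetLemmas
section Claims
open List Relation

variable {N : RootedNet} {X : Finset ℕ}

lemma mem_edges_of_filtpair {v a b : ℕ}
    (hfilt : N.edges.filter (fun e => e.2 = v) = {(a, v), (b, v)}) :
    (a, v) ∈ N.edges ∧ (b, v) ∈ N.edges := by
  constructor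
  · have : (a, v) ∈ N.edges.filter (fun e => e.2 = v) := by rw [hfilt]; simp
    exact (Multiset.mem_filter.mp this).1
  · have : (b, v) ∈ N.edges.filter (fun e => e.2 = v) := by rw [hfilt]; simp
    exact (Multiset.mem_filter.mp this).1

lemma parent_mem_pair {v a b u : ℕ}
    (hfilt : N.edges.filter (fun e => e.2 = v) = {(a, v), (b, v)})
    (hu : (u, v) ∈ N.edges) : u = a ∨ u = b := by
  have : (u, v) ∈ ({(a, v), (b, v)} : Multiset (ℕ × ℕ)) := by
    rw [← hfilt]; exact Multiset.mem_filter.mpr ⟨hu, rfl⟩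
  rcases Multiset.mem_cons.mp this with h | h
  · exact Or.inl (Prod.ext_iff.mp h).1
  · rw [Multiset.mem_singleton] at h
    exact Or.inr (Prod.ext_iff.mp h).1

lemma parent_ne_root (hphy : N.IsPhylo X) (hL : Level1 N.underlying) {u v : ℕ}
    (hv2 : N.inDeg v = 2) (hu : (u, v) ∈ N.edges) : u ≠ N.root := by
  have hends := hphy.2.2.1
  have hacyc := hphy.2.2.2.1
  have hro := hphy.2.2.2.2.2.2.1
  intro heq
  subst heq
  obtain ⟨a, b, hab, hfilt⟩ := parents_ne hphy hL hv2
  obtain ⟨hav, hbv⟩ := mem_edges_of_filtpair hfilt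
  obtain ⟨o, ho_edge, ho_ne⟩ : ∃ o, (o, v) ∈ N.edges ∧ o ≠ N.root := by
    rcases parent_mem_pair hfilt hu with h | h
    · exact ⟨b, hbv, fun hb => hab (by omega)⟩
    · exact ⟨a, hav, fun ha => hab (by omega)⟩
  obtain ⟨p, hc, hh, hl, hnd⟩ := exists_path hphy (hends _ ho_edge).1
  obtain ⟨ys, rfl⟩ := List.head?_eq_some_iff.mp hh
  cases ys with
  | nil =>
      have : N.root = o := by simpa using hl
      exact ho_ne this.symm
  | cons b₀ t' =>
      have hrb : N.Rel N.root b₀ := (List.isChain_cons_cons.mp hc).1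
      by_cases hb₀ : b₀ = v
      · have hvmem : v ∈ N.root :: b₀ :: t' := by rw [hb₀]; simp
        have hrt : ReflTransGen N.Rel v o := by
          have h := chain'_reflTransGen_getLastD hc hvmem 0
          rwa [List.getLastD_eq_getLast?, hl] at h
        exact hacyc v (Relation.TransGen.tail' hrt ho_edge)
      · have hm1 : (N.root, b₀) ∈ N.edges.filter (fun e => e.1 = N.root) :=
          Multiset.mem_filter.mpr ⟨hrb, rfl⟩
        have hm2 : (N.root, v) ∈ N.edges.filter (fun e => e.1 = N.root) :=
          Multiset.mem_filter.mpr ⟨hu, rfl⟩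
        have hne2 : ((N.root, b₀) : ℕ × ℕ) ≠ (N.root, v) := by
          intro h; exact hb₀ (Prod.ext_iff.mp h).2
        have h2 := two_mem_card hm1 hm2 hne2
        rw [RootedNet.outDeg] at hro
        omega

lemma parent_not_ret (hphy : N.IsPhylo X) (hL : Level1 N.underlying) {u v : ℕ}
    (hv2 : N.inDeg v = 2) (hu : (u, v) ∈ N.edges) : N.inDeg u ≠ 2 := by
  intro hu2
  have hacyc := hphy.2.2.2.1
  obtain ⟨a, b, hab, hfilt⟩ := parents_ne hphy hL hv2
  obtain ⟨hav, hbv⟩ := mem_edges_of_filtpair hfilt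
  obtain ⟨C, hC, hvC, hPC2, hCa, hCb, hCP3, hCP5⟩ := exists_cycle hphy hav hbv hab
  have hsuv : s(u, v) ∈ cycleEdges C := by
    rcases parent_mem_pair hfilt hu with rfl | rfl
    · exact hCa
    · exact hCb
  obtain ⟨a', b', hab', hfilt'⟩ := parents_ne hphy hL hu2
  obtain ⟨ha'u, hb'u⟩ := mem_edges_of_filtpair hfilt'
  obtain ⟨D, hD, huD, hPD2, -, -, -, -⟩ := exists_cycle hphy ha'u hb'u hab'
  have hvD : v ∉ D := by
    intro hvD
    rcases hPD2 v hvD with heq | h | h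
    · subst heq; exact hacyc v (Relation.TransGen.single hu)
    · exact hacyc v (Relation.TransGen.tail' (h.tail ha'u) hu)
    · exact hacyc v (Relation.TransGen.tail' (h.tail hb'u) hu)
  have hne_cyc : cycleEdges C ≠ cycleEdges D := by
    intro heq
    have hmem : s(u, v) ∈ cycleEdges D := heq ▸ hsuv
    exact hvD (cycleEdges_endpoints hmem v (Sym2.mem_mk_right u v))
  have huC : u ∈ C := cycleEdges_endpoints hsuv u (Sym2.mem_mk_left u v)
  exact hL.2 C D hC hD hne_cyc u huC huD

lemma parents_disjoint (hphy : N.IsPhylo X) (hL : Level1 N.underlying) {u v v' : ℕ}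
    (hv2 : N.inDeg v = 2) (hv2' : N.inDeg v' = 2) (hvv' : v ≠ v')
    (h1 : (u, v) ∈ N.edges) (h2 : (u, v') ∈ N.edges) : False := by
  have hacyc := hphy.2.2.2.1
  obtain ⟨a, b, hab, hfilt⟩ := parents_ne hphy hL hv2
  obtain ⟨hav, hbv⟩ := mem_edges_of_filtpair hfilt
  obtain ⟨a', b', hab', hfilt'⟩ := parents_ne hphy hL hv2'
  obtain ⟨ha'v', hb'v'⟩ := mem_edges_of_filtpair hfilt'
  obtain ⟨C, hC, hvC, -, hCa, hCb, hCP3, -⟩ := exists_cycle hphy hav hbv hab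
  obtain ⟨C', hC', hv'C', -, hC'a, hC'b, -, hC'P5⟩ := exists_cycle hphy ha'v' hb'v' hab'
  have hsuv : s(u, v) ∈ cycleEdges C := by
    rcases parent_mem_pair hfilt h1 with rfl | rfl
    · exact hCa
    · exact hCb
  have hsuv' : s(u, v') ∈ cycleEdges C' := by
    rcases parent_mem_pair hfilt' h2 with rfl | rfl
    · exact hC'a
    · exact hC'b
  have huC : u ∈ C := cycleEdges_endpoints hsuv u (Sym2.mem_mk_left u v)
  have huC' : u ∈ C' := cycleEdges_endpoints hsuv' u (Sym2.mem_mk_left u v')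
  by_cases heq : cycleEdges C = cycleEdges C'
  · have hvC'mem : v ∈ C' := cycleEdges_endpoints (heq ▸ hsuv) v (Sym2.mem_mk_right u v)
    obtain ⟨y, hy_edge, hy_mem⟩ := hC'P5 v hvC'mem hvv'
    have hy_memC : s(v, y) ∈ cycleEdges C := heq ▸ hy_mem
    rcases hCP3 _ hy_memC (Sym2.mem_mk_left v y) with h | h
    · rcases Sym2.eq_iff.mp h with ⟨hva, hyv⟩ | ⟨-, hya⟩
      · rw [hyv] at hy_edge; exact hacyc v (Relation.TransGen.single hy_edge)
      · rw [hya] at hy_edge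
        exact hacyc v (Relation.TransGen.head hy_edge (Relation.TransGen.single hav))
    · rcases Sym2.eq_iff.mp h with ⟨hva, hyv⟩ | ⟨-, hya⟩
      · rw [hyv] at hy_edge; exact hacyc v (Relation.TransGen.single hy_edge)
      · rw [hya] at hy_edge
        exact hacyc v (Relation.TransGen.head hy_edge (Relation.TransGen.single hbv))
  · exact hL.2 C C' hC hC' heq u huC huC'

lemma degree_sum (V : Finset ℕ) (s : Multiset (ℕ × ℕ)) (f : ℕ × ℕ → ℕ)
    (h : ∀ e ∈ s, f e ∈ V) :
    ∑ v ∈ V, Multiset.card (s.filter (fun e => f e = v)) = Multiset.card s := by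
  induction s using Multiset.induction_on with
  | empty => simp
  | cons a s ih =>
      have ha : f a ∈ V := h a (Multiset.mem_cons_self a s)
      have ih' := ih (fun e he => h e (Multiset.mem_cons_of_mem he))
      have hsplit : ∀ v, Multiset.card ((a ::ₘ s).filter (fun e => f e = v))
          = (if f a = v then 1 else 0) + Multiset.card (s.filter (fun e => f e = v)) := by
        intro v
        rw [Multiset.filter_cons, Multiset.card_add]
        congr 1
        split_ifs <;> simp
      calc ∑ v ∈ V, Multiset.card ((a ::ₘ s).filter (fun e => f e = v))
          = ∑ v ∈ V, ((if f a = v then 1 else 0)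
              + Multiset.card (s.filter (fun e => f e = v))) :=
            Finset.sum_congr rfl (fun v _ => hsplit v)
        _ = (∑ v ∈ V, if f a = v then 1 else 0)
              + ∑ v ∈ V, Multiset.card (s.filter (fun e => f e = v)) :=
            Finset.sum_add_distrib
        _ = 1 + Multiset.card s := by
            rw [ih', Finset.sum_ite_eq V (f a) (fun _ => 1), if_pos ha]
        _ = Multiset.card (a ::ₘ s) := by rw [Multiset.card_cons]; omega

theorem rooted_bound (hphy : N.IsPhylo X) (hL : Level1 N.underlying) :
    N.numRet ≤ X.card - 1 := by
  classical
  have hXne := hphy.1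
  have hXsub := hphy.2.1
  have hends := hphy.2.2.1
  have hacyc := hphy.2.2.2.1
  have hrv := hphy.2.2.2.2.1
  have hri := hphy.2.2.2.2.2.1
  have hro := hphy.2.2.2.2.2.2.1
  have hlf := hphy.2.2.2.2.2.2.2.1
  have hlfi := hphy.2.2.2.2.2.2.2.2.1
  have hcls := hphy.2.2.2.2.2.2.2.2.2
  set Tf := N.verts.filter (fun v => N.inDeg v = 1 ∧ N.outDeg v = 2) with hTfdef
  set Rf := N.verts.filter (fun v => N.inDeg v = 2) with hRfdef
  have hRf_prop : ∀ v ∈ Rf, N.inDeg v = 2 ∧ N.outDeg v = 1 := by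
    intro v hv
    obtain ⟨hv1, hv2⟩ := Finset.mem_filter.mp hv
    refine ⟨hv2, ?_⟩
    have hvr : v ≠ N.root := by rintro rfl; omega
    by_cases h0 : N.outDeg v = 0
    · have := hlfi v hv1 h0; omega
    · rcases hcls v hv1 hvr h0 with ⟨h1, -⟩ | ⟨-, h1⟩
      · omega
      · exact h1
  have hpartition : N.verts = insert N.root (X ∪ (Tf ∪ Rf)) := by
    ext w
    simp only [Finset.mem_insert, Finset.mem_union, hTfdef, hRfdef, Finset.mem_filter]
    constructor
    · intro hw
      by_cases h1 : w = N.root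
      · exact Or.inl h1
      by_cases h0 : N.outDeg w = 0
      · exact Or.inr (Or.inl ((hlf w hw).mpr h0))
      rcases hcls w hw h1 h0 with h | h
      · exact Or.inr (Or.inr (Or.inl ⟨hw, h⟩))
      · exact Or.inr (Or.inr (Or.inr ⟨hw, h.1⟩))
    · rintro (rfl | hw | ⟨hw, -⟩ | ⟨hw, -⟩)
      · exact hrv
      · exact hXsub hw
      · exact hw
      · exact hw
  have hrootX : N.root ∉ X := by intro h; have := (hlf _ hrv).mp h; omega
  have hrootT : N.root ∉ Tf := by
    intro h; have := (Finset.mem_filter.mp h).2.1; omega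
  have hrootR : N.root ∉ Rf := by
    intro h; have := (Finset.mem_filter.mp h).2; omega
  have hXT : ∀ x ∈ X, x ∉ Tf := by
    intro x hx h
    have h1 := (hlf x (hXsub hx)).mp hx
    have := (Finset.mem_filter.mp h).2.2; omega
  have hXR : ∀ x ∈ X, x ∉ Rf := by
    intro x hx h
    have h1 := hlfi x (hXsub hx) ((hlf x (hXsub hx)).mp hx)
    have := (Finset.mem_filter.mp h).2; omega
  have hTR : ∀ x ∈ Tf, x ∉ Rf := by
    intro x hx h
    have h1 := (Finset.mem_filter.mp hx).2.1
    have := (Finset.mem_filter.mp h).2; omega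
  have hd1 : Disjoint Tf Rf := Finset.disjoint_left.mpr hTR
  have hd2 : Disjoint X (Tf ∪ Rf) := Finset.disjoint_left.mpr (by
    intro x hx hmem
    rcases Finset.mem_union.mp hmem with h | h
    · exact hXT x hx h
    · exact hXR x hx h)
  have hd3 : N.root ∉ X ∪ (Tf ∪ Rf) := by
    intro h
    rcases Finset.mem_union.mp h with h | h
    · exact hrootX h
    rcases Finset.mem_union.mp h with h | h
    · exact hrootT h
    · exact hrootR h
  have hsum_out : ∑ v ∈ N.verts, N.outDeg v = Multiset.card N.edges :=
    degree_sum N.verts N.edges Prod.fst (fun e he => (hends e he).1)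
  have hsum_in : ∑ v ∈ N.verts, N.inDeg v = Multiset.card N.edges :=
    degree_sum N.verts N.edges Prod.snd (fun e he => (hends e he).2)
  have hsX : ∑ x ∈ X, N.outDeg x = 0 :=
    Finset.sum_eq_zero (fun x hx => (hlf x (hXsub hx)).mp hx)
  have hsT : ∑ v ∈ Tf, N.outDeg v = Tf.card * 2 := by
    rw [Finset.sum_congr rfl (fun v hv => (Finset.mem_filter.mp hv).2.2),
      Finset.sum_const, smul_eq_mul]
  have hsR : ∑ v ∈ Rf, N.outDeg v = Rf.card * 1 := by
    rw [Finset.sum_congr rfl (fun v hv => (hRf_prop v hv).2), Finset.sum_const,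
      smul_eq_mul]
  have houtsum : ∑ v ∈ N.verts, N.outDeg v = 1 + (0 + (Tf.card * 2 + Rf.card * 1)) := by
    rw [hpartition, Finset.sum_insert hd3, Finset.sum_union hd2, Finset.sum_union hd1,
      hsX, hsT, hsR, hro]
  have hsX' : ∑ x ∈ X, N.inDeg x = X.card * 1 := by
    rw [Finset.sum_congr rfl
      (fun x hx => hlfi x (hXsub hx) ((hlf x (hXsub hx)).mp hx)),
      Finset.sum_const, smul_eq_mul]
  have hsT' : ∑ v ∈ Tf, N.inDeg v = Tf.card * 1 := by
    rw [Finset.sum_congr rfl (fun v hv => (Finset.mem_filter.mp hv).2.1),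
      Finset.sum_const, smul_eq_mul]
  have hsR' : ∑ v ∈ Rf, N.inDeg v = Rf.card * 2 := by
    rw [Finset.sum_congr rfl (fun v hv => (hRf_prop v hv).1), Finset.sum_const,
      smul_eq_mul]
  have hinsum : ∑ v ∈ N.verts, N.inDeg v = 0 + (X.card * 1 + (Tf.card * 1 + Rf.card * 2)) := by
    rw [hpartition, Finset.sum_insert hd3, Finset.sum_union hd2, Finset.sum_union hd1,
      hsX', hsT', hsR', hri]
  have hpar : ∀ v : ℕ, ∃ u₁ u₂ : ℕ, v ∈ Rf →
      u₁ ≠ u₂ ∧ (u₁, v) ∈ N.edges ∧ (u₂, v) ∈ N.edges ∧ u₁ ∈ Tf ∧ u₂ ∈ Tf := by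
    intro v
    by_cases hv : v ∈ Rf
    · obtain ⟨hv1, hv2⟩ := Finset.mem_filter.mp hv
      obtain ⟨a, b, hab, hfilt⟩ := parents_ne hphy hL hv2
      obtain ⟨hav, hbv⟩ := mem_edges_of_filtpair hfilt
      have hTmem : ∀ u, (u, v) ∈ N.edges → u ∈ Tf := by
        intro u hu
        have huv : u ∈ N.verts := (hends _ hu).1
        have hur : u ≠ N.root := parent_ne_root hphy hL hv2 hu
        have hu2 : N.inDeg u ≠ 2 := parent_not_ret hphy hL hv2 hu
        have h0 : N.outDeg u ≠ 0 := outDeg_pos_of_edge hu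
        rcases hcls u huv hur h0 with h | h
        · exact Finset.mem_filter.mpr ⟨huv, h⟩
        · exact absurd h.1 hu2
      exact ⟨a, b, fun _ => ⟨hab, hav, hbv, hTmem a hav, hTmem b hbv⟩⟩
    · exact ⟨0, 1, fun h => absurd h hv⟩
  choose F G hFG using hpar
  have hsub : Rf.biUnion (fun v => ({F v, G v} : Finset ℕ)) ⊆ Tf := by
    intro u hu
    obtain ⟨v, hv, humem⟩ := Finset.mem_biUnion.mp hu
    obtain ⟨-, -, -, hF, hG⟩ := hFG v hv
    rcases Finset.mem_insert.mp humem with rfl | h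
    · exact hF
    · rw [Finset.mem_singleton.mp h]; exact hG
  have hdisj : ∀ v₁ ∈ Rf, ∀ v₂ ∈ Rf, v₁ ≠ v₂ →
      Disjoint ({F v₁, G v₁} : Finset ℕ) ({F v₂, G v₂} : Finset ℕ) := by
    intro v₁ h₁ v₂ h₂ hne12
    rw [Finset.disjoint_left]
    intro u hu1 hu2
    have e1 : (u, v₁) ∈ N.edges := by
      obtain ⟨-, hF, hG, -, -⟩ := hFG v₁ h₁
      rcases Finset.mem_insert.mp hu1 with rfl | h
      · exact hF
      · exact (Finset.mem_singleton.mp h) ▸ hG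
    have e2 : (u, v₂) ∈ N.edges := by
      obtain ⟨-, hF, hG, -, -⟩ := hFG v₂ h₂
      rcases Finset.mem_insert.mp hu2 with rfl | h
      · exact hF
      · exact (Finset.mem_singleton.mp h) ▸ hG
    exact parents_disjoint hphy hL (hRf_prop v₁ h₁).1 (hRf_prop v₂ h₂).1 hne12 e1 e2
  have hcard2 : 2 * Rf.card ≤ Tf.card := by
    have hbi := Finset.card_biUnion hdisj
    have hcards : ∀ v ∈ Rf, ({F v, G v} : Finset ℕ).card = 2 := by
      intro v hv
      rw [Finset.card_insert_of_notMem
        (fun h => (hFG v hv).1 (Finset.mem_singleton.mp h)), Finset.card_singleton]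
    calc 2 * Rf.card = ∑ _v ∈ Rf, 2 := by rw [Finset.sum_const, smul_eq_mul, mul_comm]
      _ = ∑ v ∈ Rf, ({F v, G v} : Finset ℕ).card :=
          Finset.sum_congr rfl (fun v hv => (hcards v hv).symm)
      _ = (Rf.biUnion (fun v => ({F v, G v} : Finset ℕ))).card := hbi.symm
      _ ≤ Tf.card := Finset.card_le_card hsub
  have hX1 : 1 ≤ X.card := Finset.card_pos.mpr hXne
  have hnum : N.numRet = Rf.card := by rw [hRfdef]; rfl
  omega

theorem final_bound (X : Finset ℕ) (hX : X.Nonempty) (N : MixedNet)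
    (hN : IsSemiLevel1 X N) : N.numRet ≤ X.card - 1 := by
  obtain ⟨Nr, ⟨hphy, hsemi⟩, hL⟩ := hN
  have hacyc := hphy.2.2.2.1
  obtain ⟨t, w₁, w₂, hroott, hfilt, hverts, hcases⟩ := hsemi
  have hkeepD : ∀ e : ℕ × ℕ, e ∈ semiKeepD Nr t → e ∈ Nr.edges ∧ Nr.inDeg e.2 = 2 := by
    intro e he
    obtain ⟨he1, he2⟩ := Multiset.mem_filter.mp he
    exact ⟨(Multiset.mem_filter.mp he1).1, he2⟩
  have hw12 : w₁ ≠ w₂ := by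
    intro heq
    have hle0 := Multiset.filter_le (fun e => e.1 = t) Nr.edges
    rw [hfilt, heq] at hle0
    have htw : (t, w₂) ∈ Nr.edges := Multiset.subset_of_le hle0 (by simp)
    have hne : t ≠ w₂ := by rintro rfl; exact hacyc t (Relation.TransGen.single htw)
    exact no_two_cycle hL hne hle0
  have hloopD : ∀ v, (v, v) ∉ semiKeepD Nr t := by
    intro v hv
    exact hacyc v (Relation.TransGen.single (hkeepD _ hv).1)
  have hindfrom : ∀ v, (∃ e ∈ N.dedges, e.2 = v) → Nr.inDeg v = 2 := by
    intro v ⟨e, he, hev⟩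
    rcases hcases with ⟨heq, -, -⟩ | ⟨hne12, hw₁2, hD, -⟩ | ⟨hne12, -, hw₂2, hD, -⟩ |
      ⟨-, -, hD, -⟩
    · exact absurd heq hw12
    · rw [hD] at he
      rcases Multiset.mem_cons.mp he with rfl | he
      · simp only at hev; subst hev; exact hw₁2
      · subst hev; exact (hkeepD _ he).2
    · rw [hD] at he
      rcases Multiset.mem_cons.mp he with rfl | he
      · simp only at hev; subst hev; exact hw₂2
      · subst hev; exact (hkeepD _ he).2
    · rw [hD] at he
      subst hev; exact (hkeepD _ he).2
  have key : ∀ v, (N.dInDeg v = 2 ∨ (v, v) ∈ N.dedges) → Nr.inDeg v = 2 := by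
    intro v hv
    rcases hv with hv | hv
    · have hpos : 0 < Multiset.card (N.dedges.filter (fun e => e.2 = v)) := by
        rw [MixedNet.dInDeg] at hv; omega
      obtain ⟨e, he⟩ := Multiset.card_pos_iff_exists_mem.mp hpos
      obtain ⟨he1, he2⟩ := Multiset.mem_filter.mp he
      exact hindfrom v ⟨e, he1, he2⟩
    · exact hindfrom v ⟨(v, v), hv, rfl⟩
  have hsub : N.verts.filter (fun v => N.dInDeg v = 2 ∨ (v, v) ∈ N.dedges)
      ⊆ Nr.verts.filter (fun v => Nr.inDeg v = 2) := by
    intro v hv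
    obtain ⟨hv1, hv2⟩ := Finset.mem_filter.mp hv
    refine Finset.mem_filter.mpr ⟨?_, key v hv2⟩
    rw [hverts] at hv1
    exact Finset.mem_of_mem_erase (Finset.mem_of_mem_erase hv1)
  calc N.numRet
      = (N.verts.filter (fun v => N.dInDeg v = 2 ∨ (v, v) ∈ N.dedges)).card := rfl
    _ ≤ (Nr.verts.filter (fun v => Nr.inDeg v = 2)).card := Finset.card_le_card hsub
    _ = Nr.numRet := rfl
    _ ≤ X.card - 1 := rooted_bound hphy hL

end Claims

/-- A semi-directed binary phylogenetic level-1 network on `X`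
has at most `|X| - 1` reticulations. -/
theorem semi_level1_reticulation_bound (X : Finset ℕ) (hX : X.Nonempty)
    (N : MixedNet) (hN : IsSemiLevel1 X N) :
    N.numRet ≤ X.card - 1 := by
  exact final_bound X hX N hN

end Phylo
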